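/- arXiv:2211.10614 — 3 statements merged into one kernel-verified Lean document; each statement's English description precedes it below -/
import Mathlib

section
/- Let n ≥ 7 and let S be a nonlocal metric basis of the wheel W_{1,n} (so S contains no central vertex and S ⊆ V(C_n), |S| ≥ 2). Then every gap of S contains at most 4 vertices; that is, for every gap A_{i,j} of S, |A_{i,j}| ≤ 4. -/
/-- `X` is a nonlocal resolving set of `G`: every pair of distinct non-adjacent
vertices is resolved by some vertex of `X`. -/
def IsNLResolving {V : Type*} (G : SimpleGraph V) (X : Finset V) : Prop :=
  ∀ u v : V, u ≠ v → ¬ G.Adj u v → ∃ x ∈ X, G.dist u x ≠ G.dist v x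

/-- The nonlocal metric dimension of `G`. -/
noncomputable def nldim {V : Type*} [Fintype V] (G : SimpleGraph V) : ℕ :=
  sInf {n | ∃ X : Finset V, X.card = n ∧ IsNLResolving G X}

/-- `X` is a resolving set of `G`. -/
def IsResolving {V : Type*} (G : SimpleGraph V) (X : Finset V) : Prop :=
  ∀ u v : V, u ≠ v → ∃ x ∈ X, G.dist u x ≠ G.dist v x

/-- The metric dimension of `G`. -/
noncomputable def metricDim {V : Type*} [Fintype V] (G : SimpleGraph V) : ℕ :=
  sInf {n | ∃ X : Finset V, X.card = n ∧ IsResolving G X}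

/-- The corona product `G ⊙ H`: one copy of `G` and, for each vertex `g` of `G`,
a copy of `H` whose vertices are all joined to `g`. -/
def corona {V W : Type*} (G : SimpleGraph V) (H : SimpleGraph W) :
    SimpleGraph (V ⊕ V × W) :=
  SimpleGraph.fromRel (fun a b =>
    match a, b with
    | Sum.inl g, Sum.inl g' => G.Adj g g'
    | Sum.inl g, Sum.inr p => g = p.1
    | Sum.inr p, Sum.inr q => p.1 = q.1 ∧ H.Adj p.2 q.2
    | _, _ => False)

/-- The join `H + K₁`: a new vertex (`none`) adjacent to every vertex of `H`. -/
def joinK1 {W : Type*} (H : SimpleGraph W) : SimpleGraph (Option W) :=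
  SimpleGraph.fromRel (fun a b =>
    a = none ∨ ∃ w w', a = some w ∧ b = some w' ∧ H.Adj w w')

/-- The wheel `W_{1,n} = K₁ + Cₙ`, with central vertex `none`. -/
def wheel (n : ℕ) : SimpleGraph (Option (Fin n)) :=
  joinK1 (SimpleGraph.cycleGraph n)

/-- `A_{i,j}` is a gap of `X ⊆ V(Cₙ)`: `i, j ∈ X`, `i ≠ j`, and no vertex of
`{i+1, …, j-1}` (cyclically) lies in `X`. -/
def IsGap {n : ℕ} (X : Finset (Fin n)) (i j : Fin n) : Prop :=
  i ∈ X ∧ j ∈ X ∧ i ≠ j ∧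
    ∀ k : Fin n, 0 < (k - i).val → (k - i).val < (j - i).val → k ∉ X

/-- The number of vertices in the gap `A_{i,j} = {i+1, …, j-1}`. -/
def gapSize {n : ℕ} (i j : Fin n) : ℕ := (j - i).val - 1

/-- The edge cover number `β'(G)`: the least number of edges of `G` covering all
vertices. -/
noncomputable def edgeCoverNum {V : Type*} [Fintype V] (G : SimpleGraph V) : ℕ :=
  sInf {n | ∃ F : Finset (Sym2 V), F.card = n ∧ ↑F ⊆ G.edgeSet ∧ ∀ v : V, ∃ e ∈ F, v ∈ e}

/-!
In `H + K₁` every vertex of `H` outside the closed neighbourhoods of two non-adjacent vertices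
`u, v` of `H` is at distance `2` from both, so a nonlocal resolving set inside `H` must meet
`N[u] ∪ N[v]`. If a gap `A_{i,j}` had at least five vertices, then `u = i + 2` and `v = i + 4`
would be non-adjacent on the cycle with `N[u] ∪ N[v] = {i + 1, …, i + 5} ⊆ A_{i,j}`, which
contains no vertex of `S`.
-/

section JoinK1

variable {W : Type*} {H : SimpleGraph W}

@[simp]
theorem joinK1_adj_some_some {u v : W} : (joinK1 H).Adj (some u) (some v) ↔ H.Adj u v := by
  simp only [joinK1, SimpleGraph.fromRel_adj, ne_eq, Option.some.injEq, reduceCtorEq,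
    false_or, exists_and_left, exists_eq_left']
  exact ⟨fun ⟨_, h⟩ => h.elim id H.adj_symm, fun h => ⟨h.ne, .inl h⟩⟩

theorem joinK1_adj_none_some (v : W) : (joinK1 H).Adj none (some v) := by
  simp [joinK1]

theorem joinK1_dist_some_some_of_not_adj {u v : W} (huv : u ≠ v) (hadj : ¬ H.Adj u v) :
    (joinK1 H).dist (some u) (some v) = 2 := by
  let w : (joinK1 H).Walk (some u) (some v) :=
    .cons (joinK1_adj_none_some u).symm (.cons (joinK1_adj_none_some v) .nil)
  have hle : (joinK1 H).dist (some u) (some v) ≤ 2 := SimpleGraph.dist_le w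
  have hpos : 0 < (joinK1 H).dist (some u) (some v) :=
    SimpleGraph.Reachable.pos_dist_of_ne ⟨w⟩ (by simpa using huv)
  have hne : (joinK1 H).dist (some u) (some v) ≠ 1 := fun h =>
    hadj (joinK1_adj_some_some.mp (SimpleGraph.dist_eq_one_iff_adj.mp h))
  omega

theorem IsNLResolving.exists_mem_eq_or_adj_of_joinK1 [DecidableEq W] {S : Finset W}
    (hS : IsNLResolving (joinK1 H) (S.image some)) {u v : W} (huv : u ≠ v)
    (hadj : ¬ H.Adj u v) : ∃ s ∈ S, s = u ∨ s = v ∨ H.Adj u s ∨ H.Adj v s := by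
  obtain ⟨x, hx, hdist⟩ := hS (some u) (some v) (by simpa using huv)
    (by simpa using hadj)
  obtain ⟨s, hs, rfl⟩ := Finset.mem_image.mp hx
  refine ⟨s, hs, ?_⟩
  by_contra! h
  obtain ⟨hsu, hsv, hus, hvs⟩ := h
  rw [joinK1_dist_some_some_of_not_adj (Ne.symm hsu) hus,
    joinK1_dist_some_some_of_not_adj (Ne.symm hsv) hvs] at hdist
  exact hdist rfl

end JoinK1

section Cycle

variable {n : ℕ}

theorem Fin.val_sub_add_val (a b : Fin n) :
    (a - b).val + b.val = a.val ∨ (a - b).val + b.val = a.val + n := by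
  by_cases h : b ≤ a
  · have := Fin.sub_val_of_le h
    have : b.val ≤ a.val := h
    omega
  · have := Fin.coe_sub_iff_lt.mpr (not_le.mp h)
    have : a.val < b.val := not_le.mp h
    omega

theorem Fin.exists_val_sub_eq (i : Fin n) {k : ℕ} (hk : k < n) : ∃ u : Fin n, (u - i).val = k :=
  have : NeZero n := ⟨i.pos.ne'⟩
  ⟨i + ⟨k, hk⟩, by rw [add_sub_cancel_left]⟩

theorem SimpleGraph.cycleGraph_adj_val_sub {a b c : Fin n} (h : (cycleGraph n).Adj a b)
    (h0 : 0 < (a - c).val) (hn : (a - c).val + 1 < n) :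
    (b - c).val = (a - c).val + 1 ∨ (b - c).val + 1 = (a - c).val := by
  rw [cycleGraph_adj'] at h
  have := a.isLt; have := b.isLt; have := c.isLt
  rcases Fin.val_sub_add_val a b with _ | _ <;> rcases Fin.val_sub_add_val b a with _ | _ <;>
    rcases Fin.val_sub_add_val a c with _ | _ <;> rcases Fin.val_sub_add_val b c with _ | _ <;>
    omega

end Cycle

theorem stmt_9_general (n : ℕ) (S : Finset (Fin n))
    (hres : IsNLResolving (wheel n) (S.image some)) :
    ∀ i j : Fin n, IsGap S i j → gapSize i j ≤ 4 := by
  rintro i j ⟨-, -, -, hgap⟩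
  by_contra! hbig
  have hji : 6 ≤ (j - i).val := by unfold gapSize at hbig; omega
  have hout : ∀ s ∈ S, (s - i).val = 0 ∨ 6 ≤ (s - i).val := fun s hs => by
    by_contra! h
    exact hgap s (by omega) (by omega) hs
  have hlt := (j - i).isLt
  obtain ⟨u, hu⟩ := Fin.exists_val_sub_eq i (k := 2) (by omega)
  obtain ⟨v, hv⟩ := Fin.exists_val_sub_eq i (k := 4) (by omega)
  have huv : u ≠ v := by rintro rfl; omega
  have hadj : ¬ (SimpleGraph.cycleGraph n).Adj u v := fun h => by
    have := SimpleGraph.cycleGraph_adj_val_sub h (c := i) (by omega) (by omega)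
    omega
  obtain ⟨s, hs, hsuv⟩ := hres.exists_mem_eq_or_adj_of_joinK1 huv hadj
  have := hout s hs
  rcases hsuv with rfl | rfl | h | h
  · omega
  · omega
  · have := SimpleGraph.cycleGraph_adj_val_sub h (c := i) (by omega) (by omega); omega
  · have := SimpleGraph.cycleGraph_adj_val_sub h (c := i) (by omega) (by omega); omega

/-- If `S ⊆ V(Cₙ)` is a nonlocal metric basis of the wheel
`W_{1,n}`, `n ≥ 7`, `|S| ≥ 2`, then every gap of `S` has at most `4`
vertices. -/
theorem stmt_9 (n : ℕ) (hn : 7 ≤ n) (S : Finset (Fin n)) (hS : 2 ≤ S.card)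
    (hres : IsNLResolving (wheel n) (S.image some))
    (hmin : (S.image some).card = nldim (wheel n)) :
    ∀ i j : Fin n, IsGap S i j → gapSize i j ≤ 4 :=
  stmt_9_general n S hres
end

section
/- Let n ≥ 7 and let X ⊆ V(C_n) be a set of cycle vertices of the wheel W_{1,n} with |X| ≥ 2 satisfying: every gap of X contains at most 4 vertices, at most one gap of X contains 3 or more vertices, and whenever a gap of X contains at least 2 vertices each of its two neighboring gaps contains at most one vertex. Then X is a nonlocal resolving set of W_{1,n}. -/
/-!
In the wheel two rim vertices are at distance `0`, `1` or `2`, so a rim vertex `t` fails to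
resolve a non-adjacent pair `a, b` exactly when `t ∉ {a, b}` and `t` is adjacent to both or to
neither. If no vertex of `X` resolves `a, b`, then `X` avoids `a`, `b` and all of their neighbours
except common ones. For `b = a ± 2` this leaves four vertices around the common neighbour outside
`X`, forcing either a gap of five vertices or two neighbouring gaps of two vertices. Otherwise
`a - 1, a, a + 1` and `b - 1, b, b + 1` lie in gaps of three or four vertices, which must be the
same gap, so `a` and `b` would be equal or adjacent.
-/

open SimpleGraph Fin.CommRing

section Wheel

variable {n : ℕ}

theorem wheel_adj_none_some (a : Fin n) : (wheel n).Adj none (some a) :=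
  ⟨by simp, Or.inl (Or.inl rfl)⟩

theorem wheel_adj_some_some {a b : Fin n} :
    (wheel n).Adj (some a) (some b) ↔ (cycleGraph n).Adj a b := by
  simp only [wheel, joinK1, fromRel_adj, reduceCtorEq, Option.some.injEq, exists_and_left,
    exists_eq_left', false_or, ne_eq]
  exact ⟨fun ⟨_, h⟩ => h.elim id (·.symm), fun h => ⟨h.ne, Or.inl h⟩⟩

theorem wheel_dist_some_some (a t : Fin n) :
    (wheel n).dist (some a) (some t) =
      if a = t then 0 else if (cycleGraph n).Adj a t then 1 else 2 := by
  split_ifs with hat hadj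
  · rw [hat, dist_self]
  · exact dist_eq_one_iff_adj.mpr (wheel_adj_some_some.mpr hadj)
  · let w : (wheel n).Walk (some a) (some t) :=
      .cons (wheel_adj_none_some a).symm (.cons (wheel_adj_none_some t) .nil)
    have hle : (wheel n).dist (some a) (some t) ≤ 2 := dist_le w
    have h0 : (wheel n).dist (some a) (some t) ≠ 0 := by
      rw [Ne, Reachable.dist_eq_zero_iff ⟨w⟩]
      simpa using hat
    have h1 : (wheel n).dist (some a) (some t) ≠ 1 := by
      rwa [Ne, dist_eq_one_iff_adj, wheel_adj_some_some]
    omega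

theorem wheel_dist_eq_iff (a b t : Fin n) :
    (wheel n).dist (some a) (some t) = (wheel n).dist (some b) (some t) ↔
      (a = t ↔ b = t) ∧ ((cycleGraph n).Adj a t ↔ (cycleGraph n).Adj b t) := by
  rw [wheel_dist_some_some, wheel_dist_some_some]
  split_ifs <;> simp_all

theorem cycleGraph_adj_iff [NeZero n] (hn : 2 ≤ n) {a b : Fin n} :
    (cycleGraph n).Adj a b ↔ b = a + 1 ∨ b = a - 1 := by
  obtain ⟨m, rfl⟩ : ∃ m, n = m + 2 := ⟨n - 2, by omega⟩
  rw [← mem_neighborSet, cycleGraph_neighborSet]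
  simp [or_comm]

theorem cycleGraph_adj_add_one [NeZero n] (hn : 2 ≤ n) (c : Fin n) :
    (cycleGraph n).Adj c (c + 1) :=
  (cycleGraph_adj_iff hn).mpr (Or.inl rfl)

theorem cycleGraph_adj_sub_one [NeZero n] (hn : 2 ≤ n) (c : Fin n) :
    (cycleGraph n).Adj c (c - 1) :=
  (cycleGraph_adj_iff hn).mpr (Or.inr rfl)

end Wheel

section Gaps

variable {n : ℕ} [NeZero n] {X : Finset (Fin n)}

theorem gapSize_add_natCast (i : Fin n) {d : ℕ} (hd : d < n) : gapSize i (i + d) = d - 1 := by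
  simp [gapSize, Nat.mod_eq_of_lt hd]

theorem isGap_add_natCast {i : Fin n} {d : ℕ} (hi : i ∈ X) (hd : i + d ∈ X) (hd0 : 0 < d)
    (hdn : d < n) (hbetween : ∀ s : ℕ, 0 < s → s < d → i + (s : Fin n) ∉ X) :
    IsGap X i (i + d) := by
  have hval : (i + d - i).val = d := by simp [Nat.mod_eq_of_lt hdn]
  refine ⟨hi, hd, fun h => ?_, fun k hk0 hkd => ?_⟩
  · rw [← h, sub_self, Fin.val_zero] at hval
    omega
  · simpa using hbetween _ hk0 (hval ▸ hkd)

theorem exists_isGap_sub_add (hX : 2 ≤ X.card) {c : Fin n} (hc : c ∉ X) :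
    ∃ p q : ℕ, IsGap X (c - (p : Fin n)) (c + (q : Fin n)) ∧
      gapSize (c - (p : Fin n)) (c + (q : Fin n)) = p + q - 1 ∧
      (∀ s < p, c - (s : Fin n) ∉ X) ∧ (∀ s < q, c + (s : Fin n) ∉ X) := by
  classical
  obtain ⟨x, hx⟩ : X.Nonempty := Finset.card_pos.mp (by omega)
  have hfwd : ∃ k : ℕ, c + k ∈ X := ⟨(x - c).val, by simpa⟩
  have hbwd : ∃ k : ℕ, c - k ∈ X := ⟨(c - x).val, by simpa⟩
  set q := Nat.find hfwd
  set p := Nat.find hbwd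
  have hqmin : ∀ s < q, c + (s : Fin n) ∉ X := fun s => Nat.find_min hfwd
  have hpmin : ∀ s < p, c - (s : Fin n) ∉ X := fun s => Nat.find_min hbwd
  have hq : c + (q : Fin n) ∈ X := Nat.find_spec hfwd
  have hp : c - (p : Fin n) ∈ X := Nat.find_spec hbwd
  have hp0 : 0 < p := Nat.pos_of_ne_zero fun h => hc (by simpa [h] using hp)
  have hpq : p + q < n := by
    -- otherwise both searches end at the same vertex, the only element of `X`
    by_contra! hle
    suffices ∀ y ∈ X, y = c + q by
      have := Finset.card_le_one.mpr fun y hy z hz => (this y hy).trans (this z hz).symm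
      omega
    intro y hy
    set t := (y - c).val
    have hyt : y = c + t := by simp [t]
    have hqt : q ≤ t := Nat.find_min' hfwd (hyt ▸ hy)
    have hpt : p ≤ n - t := Nat.find_min' hbwd (by
      rwa [Nat.cast_sub (y - c).isLt.le, Fin.natCast_self, zero_sub, sub_neg_eq_add, ← hyt])
    rw [hyt, show t = q by omega]
  have hcq : c + q = (c - p) + ((p + q : ℕ) : Fin n) := by push_cast; ring
  refine ⟨p, q, ?_, ?_, hpmin, hqmin⟩
  · rw [hcq]
    refine isGap_add_natCast hp (hcq ▸ hq) (by omega) hpq fun s _ hs => ?_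
    rcases lt_or_ge s p with hsp | hsp
    · convert hpmin (p - s) (by omega) using 2
      push_cast [hsp.le]
      ring
    · convert hqmin (s - p) (by omega) using 2
      push_cast [hsp]
      ring
  · rw [hcq, gapSize_add_natCast _ hpq]

end Gaps

section GapConditions

variable {n : ℕ} [NeZero n] {X : Finset (Fin n)}

theorem exists_isGap_sub_of_three_not_mem (hX : 2 ≤ X.card)
    (h1 : ∀ i j : Fin n, IsGap X i j → gapSize i j ≤ 4) {c : Fin n}
    (hl : c - 1 ∉ X) (hc : c ∉ X) (hr : c + 1 ∉ X) :
    ∃ p : ℕ, (p = 2 ∨ p = 3) ∧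
      ∃ j, IsGap X (c - (p : Fin n)) j ∧ 3 ≤ gapSize (c - (p : Fin n)) j := by
  obtain ⟨p, q, hgap, hsize, -, -⟩ := exists_isGap_sub_add hX hc
  have hp : 2 ≤ p := by
    by_contra! h
    have := hgap.1
    interval_cases p <;> simp_all
  have hq : 2 ≤ q := by
    by_contra! h
    have := hgap.2.1
    interval_cases q <;> simp_all
  have := h1 _ _ hgap
  exact ⟨p, by omega, _, hgap, by omega⟩

theorem eq_or_eq_add_one_or_eq_sub_one_of_three_not_mem (hX : 2 ≤ X.card)
    (h1 : ∀ i j : Fin n, IsGap X i j → gapSize i j ≤ 4)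
    (h2 : ∀ i j i' j' : Fin n, IsGap X i j → IsGap X i' j' →
      3 ≤ gapSize i j → 3 ≤ gapSize i' j' → i = i' ∧ j = j')
    {a b : Fin n} (hal : a - 1 ∉ X) (ha : a ∉ X) (har : a + 1 ∉ X)
    (hbl : b - 1 ∉ X) (hb : b ∉ X) (hbr : b + 1 ∉ X) :
    b = a ∨ b = a + 1 ∨ b = a - 1 := by
  obtain ⟨p, hp, j, hgap, hsize⟩ := exists_isGap_sub_of_three_not_mem hX h1 hal ha har
  obtain ⟨p', hp', j', hgap', hsize'⟩ := exists_isGap_sub_of_three_not_mem hX h1 hbl hb hbr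
  have heq := (h2 _ _ _ _ hgap hgap' hsize hsize').1
  rcases hp with rfl | rfl <;> rcases hp' with rfl | rfl <;> push_cast at heq
  · exact Or.inl (by linear_combination -heq)
  · exact Or.inr (Or.inl (by linear_combination -heq))
  · exact Or.inr (Or.inr (by linear_combination -heq))
  · exact Or.inl (by linear_combination -heq)

theorem false_of_four_not_mem_around (hX : 2 ≤ X.card)
    (h1 : ∀ i j : Fin n, IsGap X i j → gapSize i j ≤ 4)
    (h3 : ∀ i j : Fin n, IsGap X i j → 2 ≤ gapSize i j →
      (∀ h : Fin n, IsGap X h i → gapSize h i ≤ 1) ∧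
      (∀ k : Fin n, IsGap X j k → gapSize j k ≤ 1))
    {m : Fin n} (hl₂ : m - 2 ∉ X) (hl₁ : m - 1 ∉ X) (hr₁ : m + 1 ∉ X)
    (hr₂ : m + 2 ∉ X) : False := by
  -- `m ∈ X`, as otherwise its gap has at least five vertices; then the two gaps ending and
  -- starting at `m` both have at least two vertices.
  have hm : m ∈ X := by
    by_contra hm
    obtain ⟨p, q, hgap, hsize, -, -⟩ := exists_isGap_sub_add hX hm
    have hp : 3 ≤ p := by
      by_contra! h
      have := hgap.1
      interval_cases p <;> simp_all
    have hq : 3 ≤ q := by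
      by_contra! h
      have := hgap.2.1
      interval_cases q <;> simp_all
    have := h1 _ _ hgap
    omega
  obtain ⟨p, q, hleft, hsize, -, hqmin⟩ := exists_isGap_sub_add hX hl₁
  have hq : q = 1 := by
    have := hleft.2.1
    have : q ≤ 1 := by
      by_contra! h
      exact hqmin 1 h (by simpa using hm)
    interval_cases q <;> simp_all
  have hp : 2 ≤ p := by
    by_contra! h
    have := hleft.1
    interval_cases p <;> simp_all [sub_sub, one_add_one_eq_two]
  obtain ⟨p', q', hright, hsize', hpmin', -⟩ := exists_isGap_sub_add hX hr₁
  have hp' : p' = 1 := by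
    have := hright.1
    have : p' ≤ 1 := by
      by_contra! h
      exact hpmin' 1 h (by simpa using hm)
    interval_cases p' <;> simp_all
  have hq' : 2 ≤ q' := by
    by_contra! h
    have := hright.2.1
    interval_cases q' <;> simp_all [add_assoc, one_add_one_eq_two]
  subst hq hp'
  rw [Nat.cast_one, sub_add_cancel] at hleft hsize
  rw [Nat.cast_one, add_sub_cancel_right] at hright hsize'
  have := (h3 _ _ hleft (by omega)).2 _ hright
  omega

end GapConditions

section Unresolved

variable {n : ℕ} [NeZero n] {X : Finset (Fin n)} {a b : Fin n}

theorem eq_add_two_of_adj_add_one (hn : 2 ≤ n) (hab : a ≠ b)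
    (h : (cycleGraph n).Adj b (a + 1)) : b = a + 2 := by
  rcases (cycleGraph_adj_iff hn).mp h with h | h
  · exact absurd (add_right_cancel h) hab
  · linear_combination -h

theorem eq_sub_two_of_adj_sub_one (hn : 2 ≤ n) (hab : a ≠ b)
    (h : (cycleGraph n).Adj b (a - 1)) : b = a - 2 := by
  rcases (cycleGraph_adj_iff hn).mp h with h | h
  · linear_combination -h
  · exact absurd (sub_left_injective h) hab

theorem Fin.four_ne_zero (hn : 5 ≤ n) : (4 : Fin n) ≠ 0 := by
  intro h
  have := congrArg Fin.val h
  simp [Nat.mod_eq_of_lt (by omega : 4 < n)] at this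

theorem false_of_eq_add_two (hn : 7 ≤ n) (hX : 2 ≤ X.card)
    (h1 : ∀ i j : Fin n, IsGap X i j → gapSize i j ≤ 4)
    (h3 : ∀ i j : Fin n, IsGap X i j → 2 ≤ gapSize i j →
      (∀ h : Fin n, IsGap X h i → gapSize h i ≤ 1) ∧
      (∀ k : Fin n, IsGap X j k → gapSize j k ≤ 1))
    (hab : a ≠ b) (ha : a ∉ X) (hb : b ∉ X)
    (hadj : ∀ t ∈ X, (cycleGraph n).Adj a t ↔ (cycleGraph n).Adj b t) (hba : b = a + 2) :
    False := by
  have hl : a - 1 ∉ X := fun h => by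
    have := eq_sub_two_of_adj_sub_one (by omega) hab
      ((hadj _ h).mp (cycleGraph_adj_sub_one (by omega) a))
    exact Fin.four_ne_zero (n := n) (by omega) (by linear_combination this - hba)
  have hr : b + 1 ∉ X := fun h => by
    have := eq_add_two_of_adj_add_one (by omega) hab.symm
      ((hadj _ h).mpr (cycleGraph_adj_add_one (by omega) b))
    exact Fin.four_ne_zero (n := n) (by omega) (by linear_combination -this - hba)
  refine false_of_four_not_mem_around (m := a + 1) hX h1 h3 ?_ (by simpa) ?_ ?_
  · rwa [show a + 1 - 2 = a - 1 by ring]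
  · rwa [show a + 1 + 1 = b by rw [hba]; ring]
  · rwa [show a + 1 + 2 = b + 1 by rw [hba]; ring]

theorem false_of_forall_adj_iff (hn : 7 ≤ n) (hX : 2 ≤ X.card)
    (h1 : ∀ i j : Fin n, IsGap X i j → gapSize i j ≤ 4)
    (h2 : ∀ i j i' j' : Fin n, IsGap X i j → IsGap X i' j' →
      3 ≤ gapSize i j → 3 ≤ gapSize i' j' → i = i' ∧ j = j')
    (h3 : ∀ i j : Fin n, IsGap X i j → 2 ≤ gapSize i j →
      (∀ h : Fin n, IsGap X h i → gapSize h i ≤ 1) ∧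
      (∀ k : Fin n, IsGap X j k → gapSize j k ≤ 1))
    (hab : a ≠ b) (hnadj : ¬ (cycleGraph n).Adj a b) (ha : a ∉ X) (hb : b ∉ X)
    (hadj : ∀ t ∈ X, (cycleGraph n).Adj a t ↔ (cycleGraph n).Adj b t) : False := by
  by_cases hba : b = a + 2
  · exact false_of_eq_add_two hn hX h1 h3 hab ha hb hadj hba
  by_cases hab2 : a = b + 2
  · exact false_of_eq_add_two hn hX h1 h3 hab.symm hb ha (fun t ht => (hadj t ht).symm) hab2
  have hn2 : 2 ≤ n := by omega
  have hal : a - 1 ∉ X := fun h => hab2 <| by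
    have := (hadj _ h).mp (cycleGraph_adj_sub_one hn2 a)
    rw [eq_sub_two_of_adj_sub_one hn2 hab this]; ring
  have har : a + 1 ∉ X := fun h =>
    hba (eq_add_two_of_adj_add_one hn2 hab ((hadj _ h).mp (cycleGraph_adj_add_one hn2 a)))
  have hbl : b - 1 ∉ X := fun h => hba <| by
    have := (hadj _ h).mpr (cycleGraph_adj_sub_one hn2 b)
    rw [eq_sub_two_of_adj_sub_one hn2 hab.symm this]; ring
  have hbr : b + 1 ∉ X := fun h =>
    hab2 (eq_add_two_of_adj_add_one hn2 hab.symm ((hadj _ h).mpr (cycleGraph_adj_add_one hn2 b)))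
  rw [cycleGraph_adj_iff hn2] at hnadj
  rcases eq_or_eq_add_one_or_eq_sub_one_of_three_not_mem hX h1 h2 hal ha har hbl hb hbr with
    h | h | h
  · exact hab h.symm
  · exact hnadj (Or.inl h)
  · exact hnadj (Or.inr h)

end Unresolved

/-- If `X ⊆ V(Cₙ)`, `n ≥ 7`, `|X| ≥ 2`, every gap of `X` has at
most `4` vertices, at most one gap has `3` or more vertices, and gaps with at
least `2` vertices have neighboring gaps with at most one vertex, then `X` is
a nonlocal resolving set of `W_{1,n}`. -/
theorem stmt_13 (n : ℕ) (hn : 7 ≤ n) (X : Finset (Fin n)) (hX : 2 ≤ X.card)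
    (h1 : ∀ i j : Fin n, IsGap X i j → gapSize i j ≤ 4)
    (h2 : ∀ i j i' j' : Fin n, IsGap X i j → IsGap X i' j' →
      3 ≤ gapSize i j → 3 ≤ gapSize i' j' → i = i' ∧ j = j')
    (h3 : ∀ i j : Fin n, IsGap X i j → 2 ≤ gapSize i j →
      (∀ h : Fin n, IsGap X h i → gapSize h i ≤ 1) ∧
      (∀ k : Fin n, IsGap X j k → gapSize j k ≤ 1)) :
    IsNLResolving (wheel n) (X.image some) := by
  have : NeZero n := ⟨by omega⟩
  rintro (_ | a) (_ | b) hne hnadj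
  · exact absurd rfl hne
  · exact absurd (wheel_adj_none_some b) hnadj
  · exact absurd (wheel_adj_none_some a).symm hnadj
  by_contra! hres
  have hsame (t : Fin n) (ht : t ∈ X) :
      (a = t ↔ b = t) ∧ ((cycleGraph n).Adj a t ↔ (cycleGraph n).Adj b t) :=
    (wheel_dist_eq_iff a b t).mp (hres _ (Finset.mem_image_of_mem some ht))
  have hab : a ≠ b := fun h => hne (congrArg some h)
  exact false_of_forall_adj_iff hn hX h1 h2 h3 hab (wheel_adj_some_some.not.mp hnadj)
    (fun ha => hab ((hsame a ha).1.mp rfl).symm) (fun hb => hab ((hsame b hb).1.mpr rfl))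
    (fun t ht => (hsame t ht).2)
end

section
/- If G is a connected simple graph, then dim_nl(G) ≤ n(G) − ω(G), where n(G) is the number of vertices of G and ω(G) its clique number. In particular, if n(G) ≥ 2, then dim_nl(G) ≤ n(G) − 2. -/
section

open Finset SimpleGraph

variable {V : Type*} {G : SimpleGraph V}

/- Of two distinct non-adjacent vertices at most one lies in the clique `K`, and a vertex outside
`K` resolves the pair: it is at distance `0` from itself and at positive distance from the other. -/
lemma SimpleGraph.Preconnected.isNLResolving_compl_of_isClique [Fintype V] [DecidableEq V]
    (hG : G.Preconnected) {K : Finset V} (hK : G.IsClique (K : Set V)) :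
    IsNLResolving G Kᶜ := by
  intro u v huv hnadj
  by_cases hu : u ∈ K
  · have hv : v ∉ K := fun hv => hnadj (hK hu hv huv)
    exact ⟨v, mem_compl.2 hv, by rw [dist_self]; exact ((hG u v).pos_dist_of_ne huv).ne'⟩
  · exact ⟨u, mem_compl.2 hu, by rw [dist_self]; exact ((hG v u).pos_dist_of_ne huv.symm).ne⟩

lemma nldim_le_card [Fintype V] {X : Finset V} (hX : IsNLResolving G X) : nldim G ≤ #X :=
  Nat.sInf_le ⟨X, rfl, hX⟩

lemma nldim_le_card_sub_card_of_isClique [Fintype V] (hG : G.Preconnected) {K : Finset V}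
    (hK : G.IsClique (K : Set V)) : nldim G ≤ Fintype.card V - #K := by
  classical
  simpa only [card_compl] using nldim_le_card (hG.isNLResolving_compl_of_isClique hK)

lemma SimpleGraph.Preconnected.two_le_cliqueNum [Fintype V] (hG : G.Preconnected)
    (hV : 2 ≤ Fintype.card V) : 2 ≤ G.cliqueNum := by
  classical
  have : Nontrivial V := Fintype.one_lt_card_iff_nontrivial.1 hV
  obtain ⟨v⟩ := (inferInstance : Nonempty V)
  obtain ⟨u, hvu⟩ := hG.exists_adj_of_nontrivial v
  have hpair : G.IsClique ({v, u} : Finset V) := by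
    rw [coe_pair]
    exact isClique_pair.2 fun _ => hvu
  simpa only [card_pair hvu.ne] using hpair.card_le_cliqueNum

end

/-- For a connected graph `G`, `dim_nl(G) ≤ n(G) − ω(G)`; in
particular, if `n(G) ≥ 2`, then `dim_nl(G) ≤ n(G) − 2`. -/
theorem stmt_14 {V : Type*} [Fintype V] (G : SimpleGraph V) (hG : G.Connected) :
    nldim G ≤ Fintype.card V - G.cliqueNum ∧
      (2 ≤ Fintype.card V → nldim G ≤ Fintype.card V - 2) := by
  have hclique : nldim G ≤ Fintype.card V - G.cliqueNum := by
    obtain ⟨K, hK⟩ := G.exists_isNClique_cliqueNum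
    simpa only [hK.card_eq] using nldim_le_card_sub_card_of_isClique hG.preconnected hK.isClique
  exact ⟨hclique, fun hV =>
    hclique.trans (Nat.sub_le_sub_left (hG.preconnected.two_le_cliqueNum hV) _)⟩
end
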